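/- Let B(t,ξ) := DΨ(t,Φ(t,ξ)) DΨ(t,Φ(t,ξ))ᵀ − Ψ̇(t,Φ(t,ξ)) ⊗ Ψ̇(t,Φ(t,ξ)), where Ψ(t,·) and Φ(t,·) are inverse C¹-diffeomorphisms for each t (so Ψ(t,Φ(t,ξ)) = ξ), and assume |Φ̇(t,ξ)|² ≤ 1−δ for some δ > 0 and |DΨ(t,x)ᵀ η|² ≥ c_Ψ |η|² for all η and a constant c_Ψ > 0. Then B(t,ξ) is symmetric and uniformly coercive: (B(t,ξ)η)·η ≥ δ c_Ψ |η|² for every η ∈ ℝ². -/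

import Mathlib

/-!
Pairing `B η` with `η` gives `‖DΨᵀ η‖² − ⟪Ψ̇, η⟫²`, which is visibly symmetric. Since
`Ψ̇ = −DΨ Φ̇`, we have `⟪Ψ̇, η⟫ = −⟪Φ̇, DΨᵀ η⟫`, so by Cauchy–Schwarz
`⟪Ψ̇, η⟫² ≤ (1 − δ) ‖DΨᵀ η‖²`; hence `⟪B η, η⟫ ≥ δ ‖DΨᵀ η‖² ≥ δ c_Ψ ‖η‖²`.
-/

open RealInnerProductSpace
open ContinuousLinearMap

variable {E F : Type*} [NormedAddCommGroup E] [InnerProductSpace ℝ E] [CompleteSpace E]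
  [NormedAddCommGroup F] [InnerProductSpace ℝ F] [CompleteSpace F]

theorem inner_apply_adjoint_sub_smul_left (J : F →L[ℝ] E) (v x y : E) :
    ⟪J (adjoint J x) - ⟪v, x⟫ • v, y⟫ = ⟪adjoint J x, adjoint J y⟫ - ⟪v, x⟫ * ⟪v, y⟫ := by
  rw [inner_sub_left, real_inner_smul_left, ← adjoint_inner_right]

theorem inner_apply_adjoint_sub_smul_comm (J : F →L[ℝ] E) (v x y : E) :
    ⟪J (adjoint J x) - ⟪v, x⟫ • v, y⟫ = ⟪x, J (adjoint J y) - ⟪v, y⟫ • v⟫ := by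
  rw [real_inner_comm _ x, inner_apply_adjoint_sub_smul_left, inner_apply_adjoint_sub_smul_left,
    real_inner_comm (adjoint J y), mul_comm]

theorem sq_inner_neg_apply_le (J : F →L[ℝ] E) (w : F) (η : E) :
    ⟪-(J w), η⟫ ^ 2 ≤ ‖w‖ ^ 2 * ‖adjoint J η‖ ^ 2 := by
  rw [inner_neg_left, neg_sq, ← adjoint_inner_right, ← mul_pow]
  exact sq_le_sq' (neg_le_of_abs_le (abs_real_inner_le_norm _ _)) (real_inner_le_norm _ _)

theorem mul_mul_norm_sq_le_inner_apply_adjoint_sub_smul {δ c : ℝ} (hδ : 0 ≤ δ)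
    (J : F →L[ℝ] E) {v η : E} (hv : ⟪v, η⟫ ^ 2 ≤ (1 - δ) * ‖adjoint J η‖ ^ 2)
    (hη : c * ‖η‖ ^ 2 ≤ ‖adjoint J η‖ ^ 2) :
    δ * c * ‖η‖ ^ 2 ≤ ⟪J (adjoint J η) - ⟪v, η⟫ • v, η⟫ := by
  rw [inner_apply_adjoint_sub_smul_left, real_inner_self_eq_norm_sq]
  nlinarith [mul_le_mul_of_nonneg_left hη hδ]

theorem coercivity_of_transformed_matrix_general
    (δ cΨ : ℝ) (hδ : 0 < δ)
    (J : EuclideanSpace ℝ (Fin 2) →L[ℝ] EuclideanSpace ℝ (Fin 2))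
    (phidot psidot : EuclideanSpace ℝ (Fin 2))
    (hpsidot : psidot = -(J phidot))
    (hphidot : ‖phidot‖^2 ≤ 1 - δ)
    (hcoer : ∀ η : EuclideanSpace ℝ (Fin 2),
      cΨ * ‖η‖^2 ≤ ‖(ContinuousLinearMap.adjoint J) η‖^2)
    (B : EuclideanSpace ℝ (Fin 2) → EuclideanSpace ℝ (Fin 2))
    (hB : ∀ η, B η = J ((ContinuousLinearMap.adjoint J) η) - ⟪psidot, η⟫ • psidot) :
    (∀ η₁ η₂ : EuclideanSpace ℝ (Fin 2), ⟪B η₁, η₂⟫ = ⟪η₁, B η₂⟫) ∧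
    (∀ η : EuclideanSpace ℝ (Fin 2), δ * cΨ * ‖η‖^2 ≤ ⟪B η, η⟫) := by
  refine ⟨fun η₁ η₂ => by rw [hB, hB, inner_apply_adjoint_sub_smul_comm], fun η => ?_⟩
  have hψ : ⟪psidot, η⟫ ^ 2 ≤ (1 - δ) * ‖adjoint J η‖ ^ 2 := by
    rw [hpsidot]
    exact (sq_inner_neg_apply_le J phidot η).trans
      (mul_le_mul_of_nonneg_right hphidot (sq_nonneg _))
  rw [hB]
  exact mul_mul_norm_sq_le_inner_apply_adjoint_sub_smul hδ.le J hψ (hcoer η)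

/-- Coercivity of the matrix `B = DΨ DΨᵀ − Ψ̇ ⊗ Ψ̇` when `Ψ̇ = −DΨ Φ̇`,
`|Φ̇|² ≤ 1−δ` and `|DΨᵀη|² ≥ c_Ψ|η|²`: `B` is symmetric and
`(Bη)·η ≥ δ c_Ψ |η|²`. -/
theorem coercivity_of_transformed_matrix
    (δ cΨ : ℝ) (hδ : 0 < δ) (hδ1 : δ ≤ 1) (hcΨ : 0 < cΨ)
    (J : EuclideanSpace ℝ (Fin 2) →L[ℝ] EuclideanSpace ℝ (Fin 2))
    (phidot psidot : EuclideanSpace ℝ (Fin 2))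
    (hpsidot : psidot = -(J phidot))
    (hphidot : ‖phidot‖^2 ≤ 1 - δ)
    (hcoer : ∀ η : EuclideanSpace ℝ (Fin 2),
      cΨ * ‖η‖^2 ≤ ‖(ContinuousLinearMap.adjoint J) η‖^2)
    (B : EuclideanSpace ℝ (Fin 2) → EuclideanSpace ℝ (Fin 2))
    (hB : ∀ η, B η = J ((ContinuousLinearMap.adjoint J) η) - ⟪psidot, η⟫ • psidot) :
    (∀ η₁ η₂ : EuclideanSpace ℝ (Fin 2), ⟪B η₁, η₂⟫ = ⟪η₁, B η₂⟫) ∧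
    (∀ η : EuclideanSpace ℝ (Fin 2), δ * cΨ * ‖η‖^2 ≤ ⟪B η, η⟫) :=
  coercivity_of_transformed_matrix_general δ cΨ hδ J phidot psidot hpsidot hphidot hcoer B hB
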